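/- There exist an integer n ≥ 1 and vectors e₁,…,e_n ∈ (0,∞)^{1+d_c} such that K* = {Σ_{i=1}^n α^i e_i : α ∈ ℝ₊^n}, and such that for every α ∈ ℝ₊^n, Σ_{i=1}^n α^i e_i = 0 implies α = 0. -/

import Mathlib

/-
`K*` is cut out by the finitely many inequalities `ξ^i ≥ 0` and `(1 + λ^{ij}) ξ^i ≥ ξ^j`, tested
against the solvent vectors `e_i` and `(1 + λ^{ij}) e_i - e_j`. A vanishing coordinate propagates
through the second family, so every nonzero `ξ ∈ K*` is strictly positive and `K*` is generated by
its compact section `Σ ξ^i = 1`. That section is a polyhedron, and an extreme point of a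
polyhedron is determined by the set of constraints active at it, so it has finitely many extreme
points; by Krein–Milman it is their convex hull. These extreme points are the `e_k`: they are
strictly positive, and their coordinate sums equal `1`, which forces positive independence.
-/

/-- The solvency cone `K` of Kabanov. -/
def solvencyCone (dc : ℕ) (lam : Fin (dc+1) → Fin (dc+1) → ℝ) : Set (Fin (dc+1) → ℝ) :=
  {x | ∃ a : Fin (dc+1) → Fin (dc+1) → ℝ, (∀ i j, 0 ≤ a i j) ∧
    ∀ i, 0 ≤ x i + ∑ j, (a j i - (1 + lam i j) * a i j)}

/-- The positive polar cone `K*` of the solvency cone. -/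
def polarCone (dc : ℕ) (lam : Fin (dc+1) → Fin (dc+1) → ℝ) : Set (Fin (dc+1) → ℝ) :=
  {ξ | ∀ x ∈ solvencyCone dc lam, 0 ≤ ∑ i, ξ i * x i}

open Set Filter Topology

section Polyhedron

variable {E ι : Type*} [AddCommGroup E] [Module ℝ E]
  (f : ι → E →ₗ[ℝ] ℝ) (b : ι → ℝ) (g : E →ₗ[ℝ] ℝ) (c : ℝ)

def polyhedron : Set E := {x | g x = c ∧ ∀ i, b i ≤ f i x}

def polyhedralCone : Set E := {x | ∀ i, 0 ≤ f i x}

theorem convex_polyhedron : Convex ℝ (polyhedron f b g c) := by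
  rintro x ⟨hgx, hfx⟩ y ⟨hgy, hfy⟩ s t hs ht hst
  refine ⟨?_, fun i => ?_⟩
  · simp only [map_add, map_smul, smul_eq_mul, hgx, hgy, ← add_mul, hst, one_mul]
  · calc b i = s * b i + t * b i := by rw [← add_mul, hst, one_mul]
      _ ≤ f i (s • x + t • y) := by
        simp only [map_add, map_smul, smul_eq_mul]
        gcongr
        exacts [hfx i, hfy i]

theorem isClosed_polyhedron [TopologicalSpace E] (hf : ∀ i, Continuous (f i))
    (hg : Continuous g) : IsClosed (polyhedron f b g c) := by
  simp only [polyhedron, ofPred_and, ofPred_forall]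
  exact (isClosed_eq hg continuous_const).inter
    (isClosed_iInter fun i => isClosed_le continuous_const (hf i))

variable {f b g c}

/-- Moving from `x` away from `y` keeps the constraints active at `x` active and, for a short
time, the others satisfied; so `x` lies strictly between `y` and a point of the polyhedron. -/
theorem eq_of_mem_extremePoints_polyhedron [Finite ι] {x y : E}
    (hx : x ∈ extremePoints ℝ (polyhedron f b g c)) (hy : y ∈ polyhedron f b g c)
    (hxy : ∀ i, f i x = b i → f i y = b i) : x = y := by
  rw [mem_extremePoints] at hx
  obtain ⟨⟨hgx, hfx⟩, hext⟩ := hx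
  have hpush : ∀ᶠ t in 𝓝 (0 : ℝ), x + t • (x - y) ∈ polyhedron f b g c := by
    refine (eventually_all.2 fun i => ?_).mono fun t ht => ⟨by simp [hgx, hy.1], ht⟩
    simp only [map_add, map_smul, map_sub, smul_eq_mul]
    rcases (hfx i).eq_or_lt with hi | hi
    · exact .of_forall fun t => by rw [← hi, hxy i hi.symm]; simp
    · refine (ContinuousAt.eventually_lt continuousAt_const (by fun_prop) ?_).mono
        fun t ht => ht.le
      simpa using hi
  obtain ⟨t, hzP, ht⟩ := ((hpush.filter_mono nhdsWithin_le_nhds).and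
    (self_mem_nhdsWithin : ∀ᶠ t in 𝓝[>] (0 : ℝ), 0 < t)).exists
  have hseg : x ∈ openSegment ℝ y (x + t • (x - y)) :=
    ⟨t / (1 + t), 1 / (1 + t), by positivity, by positivity, by field_simp; ring, by
      match_scalars <;> field_simp; ring⟩
  exact (hext y hy _ hzP hseg).1.symm

theorem finite_extremePoints_polyhedron [Finite ι] :
    (extremePoints ℝ (polyhedron f b g c)).Finite := by
  refine Finite.of_finite_image (f := fun x => {i | f i x = b i}) (toFinite _) ?_
  intro x hx y hy hxy
  exact eq_of_mem_extremePoints_polyhedron hx (extremePoints_subset hy)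
    fun i hi => (Set.ext_iff.1 hxy i).1 hi

variable [TopologicalSpace E] [T2Space E] [IsTopologicalAddGroup E] [ContinuousSMul ℝ E]
  [LocallyConvexSpace ℝ E]

theorem polyhedron_eq_convexHull_extremePoints [Finite ι] (hP : IsCompact (polyhedron f b g c)) :
    polyhedron f b g c = convexHull ℝ (extremePoints ℝ (polyhedron f b g c)) := by
  rw [← (finite_extremePoints_polyhedron.isCompact_convexHull ℝ).isClosed.closure_eq,
    closure_convexHull_extremePoints hP (convex_polyhedron f b g c)]

end Polyhedron

theorem exists_sum_smul_eq_of_mem_convexHull_range {E ι : Type*} [AddCommGroup E] [Module ℝ E]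
    [Fintype ι] {v : ι → E} {x : E} (hx : x ∈ convexHull ℝ (range v)) :
    ∃ w : ι → ℝ, (∀ i, 0 ≤ w i) ∧ ∑ i, w i = 1 ∧ x = ∑ i, w i • v i := by
  classical
  rw [convexHull_range_eq_exists_affineCombination] at hx
  obtain ⟨s, w, hw₀, hw₁, rfl⟩ := hx
  have hsum : ∑ i, (s : Set ι).indicator w i = 1 := by
    rwa [Finset.sum_indicator_subset _ s.subset_univ]
  refine ⟨(s : Set ι).indicator w, fun i => ?_, hsum, ?_⟩
  · by_cases hi : i ∈ s <;> simp [hi, hw₀]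
  · rw [Finset.affineCombination_indicator_subset w v s.subset_univ,
      Finset.affineCombination_eq_linear_combination _ _ _ hsum]

section PolyhedralCone

variable {E ι : Type*} [AddCommGroup E] [Module ℝ E] [TopologicalSpace E] [T2Space E]
  [IsTopologicalAddGroup E] [ContinuousSMul ℝ E] [LocallyConvexSpace ℝ E] [Finite ι]
  {f : ι → E →ₗ[ℝ] ℝ} {g : E →ₗ[ℝ] ℝ}

theorem exists_generators_polyhedralCone_of_isCompact_base
    (hg : ∀ x ∈ polyhedralCone f, x ≠ 0 → 0 < g x)
    (hbase : IsCompact (polyhedron f 0 g 1)) :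
    ∃ n, ∃ e : Fin n → E, (∀ k, e k ∈ polyhedron f 0 g 1) ∧
      polyhedralCone f = {x | ∃ α : Fin n → ℝ, (∀ k, 0 ≤ α k) ∧ x = ∑ k, α k • e k} := by
  obtain ⟨n, e, he⟩ := finite_extremePoints_polyhedron (f := f) (b := 0) (g := g) (c := 1)
    |>.fin_embedding
  have hmem : ∀ k, e k ∈ polyhedron f 0 g 1 := fun k => extremePoints_subset (he ▸ mem_range_self k)
  refine ⟨n, e, hmem, Subset.antisymm (fun x hx => ?_) ?_⟩
  · rcases eq_or_ne x 0 with rfl | hx0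
    · exact ⟨0, fun _ => le_rfl, by simp⟩
    have hgx := hg x hx hx0
    have hxbase : (g x)⁻¹ • x ∈ convexHull ℝ (range e) := by
      rw [he, ← polyhedron_eq_convexHull_extremePoints hbase]
      exact ⟨by simp [hgx.ne'], fun i => by simpa using mul_nonneg (inv_nonneg.2 hgx.le) (hx i)⟩
    obtain ⟨w, hw₀, -, hw⟩ := exists_sum_smul_eq_of_mem_convexHull_range hxbase
    refine ⟨g x • w, fun k => mul_nonneg hgx.le (hw₀ k), ?_⟩
    calc x = g x • (g x)⁻¹ • x := (smul_inv_smul₀ hgx.ne' x).symm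
      _ = ∑ k, (g x • w) k • e k := by simp [hw, Finset.smul_sum, smul_smul]
  · rintro _ ⟨α, hα, rfl⟩ i
    simpa using Finset.sum_nonneg fun k _ => mul_nonneg (hα k) ((hmem k).2 i)

end PolyhedralCone

theorem eq_zero_of_nonneg_of_sum_smul_eq_zero {E ι : Type*} [AddCommGroup E] [Module ℝ E]
    [Fintype ι] {g : E →ₗ[ℝ] ℝ} {e : ι → E} (he : ∀ k, g (e k) = 1) {α : ι → ℝ}
    (hα : ∀ k, 0 ≤ α k) (hsum : ∑ k, α k • e k = 0) : α = 0 := by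
  have hα_sum : ∑ k, α k = 0 := by simpa [he] using congrArg g hsum
  funext k
  exact (Finset.sum_eq_zero_iff_of_nonneg fun k _ => hα k).1 hα_sum k (Finset.mem_univ k)

def coordSum (ι : Type*) [Fintype ι] : (ι → ℝ) →ₗ[ℝ] ℝ := ∑ i, LinearMap.proj i

@[simp]
theorem coordSum_apply {ι : Type*} [Fintype ι] (x : ι → ℝ) : coordSum ι x = ∑ i, x i := by
  simp [coordSum]

section PolarCone

variable {dc : ℕ} {lam : Fin (dc+1) → Fin (dc+1) → ℝ}

theorem single_mem_solvencyCone (i : Fin (dc+1)) :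
    Pi.single i 1 ∈ solvencyCone dc lam :=
  ⟨0, fun _ _ => le_rfl, fun k => by simp [Pi.single_apply]; positivity⟩

theorem exchange_mem_solvencyCone (i j : Fin (dc+1)) :
    (1 + lam i j) • Pi.single i 1 - Pi.single j 1 ∈ solvencyCone dc lam := by
  refine ⟨fun p q => if p = i ∧ q = j then 1 else 0, fun p q => by positivity, fun k => ?_⟩
  obtain rfl | hki := eq_or_ne k i <;> obtain rfl | hkj := eq_or_ne k j <;>
    simp [Finset.sum_sub_distrib, *]

theorem mem_polarCone_iff {ξ : Fin (dc+1) → ℝ} :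
    ξ ∈ polarCone dc lam ↔ (∀ i, 0 ≤ ξ i) ∧ ∀ i j, ξ j ≤ (1 + lam i j) * ξ i := by
  refine ⟨fun hξ => ⟨fun i => ?_, fun i j => ?_⟩, fun ⟨hξ₀, hξ⟩ x ⟨a, ha, hx⟩ => ?_⟩
  · simpa [Pi.single_apply] using hξ _ (single_mem_solvencyCone i)
  · simpa [Pi.single_apply, mul_sub, Finset.sum_sub_distrib, mul_comm] using
      hξ _ (exchange_mem_solvencyCone i j)
  · calc (0 : ℝ) ≤ ∑ k, ∑ m, a k m * ((1 + lam k m) * ξ k - ξ m) :=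
          Finset.sum_nonneg fun k _ => Finset.sum_nonneg fun m _ =>
            mul_nonneg (ha k m) (sub_nonneg.2 (hξ k m))
      _ = -∑ k, ξ k * ∑ m, (a m k - (1 + lam k m) * a k m) := by
          simp only [Finset.mul_sum, mul_sub, Finset.sum_sub_distrib, neg_sub]
          rw [Finset.sum_comm (f := fun k m => a k m * ξ m)]
          congr 1 <;> exact Finset.sum_congr rfl fun _ _ => Finset.sum_congr rfl fun _ _ => by ring
      _ ≤ ∑ k, ξ k * x k := by
          rw [neg_le_iff_add_nonneg, ← Finset.sum_add_distrib]
          exact Finset.sum_nonneg fun k _ => by rw [← mul_add]; exact mul_nonneg (hξ₀ k) (hx k)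

theorem pos_of_mem_polarCone {ξ : Fin (dc+1) → ℝ} (hξ : ξ ∈ polarCone dc lam) (hξ0 : ξ ≠ 0)
    (k : Fin (dc+1)) : 0 < ξ k := by
  obtain ⟨hξ₀, hξ⟩ := mem_polarCone_iff.1 hξ
  refine (hξ₀ k).lt_of_ne fun hk => hξ0 (funext fun j => ?_)
  exact le_antisymm (by simpa [← hk] using hξ k j) (hξ₀ j)

theorem one_mem_polarCone (hlam : ∀ i j, 0 ≤ lam i j) : 1 ∈ polarCone dc lam :=
  mem_polarCone_iff.2 ⟨fun _ => zero_le_one, fun i j => by simpa using hlam i j⟩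

variable (dc lam)

def polarConstraint :
    Fin (dc+1) ⊕ Fin (dc+1) × Fin (dc+1) → (Fin (dc+1) → ℝ) →ₗ[ℝ] ℝ
  | .inl i => LinearMap.proj i
  | .inr (i, j) => (1 + lam i j) • LinearMap.proj i - LinearMap.proj j

theorem polarCone_eq_polyhedralCone :
    polarCone dc lam = polyhedralCone (polarConstraint dc lam) := by
  ext ξ
  simp [mem_polarCone_iff, polyhedralCone, polarConstraint, Sum.forall, Prod.forall]

theorem isCompact_polarCone_inter_simplex :
    IsCompact (polyhedron (polarConstraint dc lam) 0 (coordSum _) 1) := by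
  have hclosed := isClosed_polyhedron (polarConstraint dc lam) 0 (coordSum _) 1
    (fun _ => LinearMap.continuous_of_finiteDimensional _)
    (LinearMap.continuous_of_finiteDimensional _)
  refine (isCompact_Icc (a := 0) (b := 1)).of_isClosed_subset hclosed fun ξ ⟨hsum, hξ⟩ => ?_
  have hξ₀ : ∀ k, 0 ≤ ξ k := fun k => hξ (.inl k)
  refine ⟨hξ₀, fun k => ?_⟩
  simpa [← hsum] using Finset.single_le_sum (fun k _ => hξ₀ k) (Finset.mem_univ k)

end PolarCone

theorem polarCone_polyhedral_generators_general (dc : ℕ)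
    (lam : Fin (dc+1) → Fin (dc+1) → ℝ) (hlam : ∀ i j, 0 ≤ lam i j) :
    ∃ n : ℕ, 1 ≤ n ∧ ∃ e : Fin n → Fin (dc+1) → ℝ,
      (∀ i k, 0 < e i k) ∧
      (polarCone dc lam =
        {x : Fin (dc+1) → ℝ | ∃ α : Fin n → ℝ, (∀ i, 0 ≤ α i) ∧ x = ∑ i, α i • e i}) ∧
      (∀ α : Fin n → ℝ, (∀ i, 0 ≤ α i) → ∑ i, α i • e i = 0 → α = 0) := by
  have hsum_pos : ∀ ξ ∈ polyhedralCone (polarConstraint dc lam), ξ ≠ 0 → 0 < coordSum _ ξ := by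
    rw [← polarCone_eq_polyhedralCone]
    intro ξ hξ hξ0
    simpa using Finset.sum_pos (fun k _ => pos_of_mem_polarCone hξ hξ0 k) Finset.univ_nonempty
  obtain ⟨n, e, he, hspan⟩ := exists_generators_polyhedralCone_of_isCompact_base hsum_pos
    (isCompact_polarCone_inter_simplex dc lam)
  rw [← polarCone_eq_polyhedralCone] at hspan
  have he_mem : ∀ k, e k ∈ polarCone dc lam := by
    rw [polarCone_eq_polyhedralCone]
    exact fun k => (he k).2
  have he_ne : ∀ k, e k ≠ 0 := fun k h => by simpa [h] using (he k).1
  have hn : 1 ≤ n := by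
    obtain ⟨α, -, h⟩ := hspan ▸ one_mem_polarCone hlam
    refine Nat.one_le_iff_ne_zero.2 fun hn0 => ?_
    subst hn0
    simp at h
  exact ⟨n, hn, e, fun k => pos_of_mem_polarCone (he_mem k) (he_ne k), hspan,
    fun α hα => eq_zero_of_nonneg_of_sum_smul_eq_zero (fun k => (he k).1) hα⟩

/-- `K*` is a polyhedral cone generated by finitely many vectors
`e₁, …, eₙ ∈ (0,∞)^{1+d_c}` which moreover are positively independent:
a nonnegative combination of them vanishes only if all coefficients vanish. -/
theorem polarCone_polyhedral_generators (dc : ℕ) (hdc : 1 ≤ dc)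
    (lam : Fin (dc+1) → Fin (dc+1) → ℝ) (hlam : ∀ i j, 0 ≤ lam i j) :
    ∃ n : ℕ, 1 ≤ n ∧ ∃ e : Fin n → Fin (dc+1) → ℝ,
      (∀ i k, 0 < e i k) ∧
      (polarCone dc lam =
        {x : Fin (dc+1) → ℝ | ∃ α : Fin n → ℝ, (∀ i, 0 ≤ α i) ∧ x = ∑ i, α i • e i}) ∧
      (∀ α : Fin n → ℝ, (∀ i, 0 ≤ α i) → ∑ i, α i • e i = 0 → α = 0) :=
  polarCone_polyhedral_generators_general dc lam hlam
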